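/- arXiv:2409.17201 — 5 statements merged into one kernel-verified Lean document; each statement's English description precedes it below -/
import Mathlib

section
/- (Proposition 1, correctness of immersion-based privacy-preserving aggregation.) Let Π₁ be a real ñ × n matrix with a left inverse Π₁ᴸ (Π₁ᴸ Π₁ = Iₙ) and let b ∈ ℝ^ñ satisfy Π₁ᴸ b = 0. Let N_c ∈ ℕ, and for each client i ∈ {1, …, N_c} let gᵢ : ℝⁿ → ℝⁿ be any function, and let ρᵢ ≥ 0 be weights with Σᵢ ρᵢ = 1. Fix an initial model w⁰ ∈ ℝⁿ and set the encoded initialization w̃⁰ = Π₁ w⁰ + b. For each i define the original iterates w_{i,0} = w⁰, w_{i,k+1} = w_{i,k} − gᵢ(w_{i,k}) and the target iterates w̃_{i,0} = w̃⁰, w̃_{i,k+1} = w̃_{i,k} − Π₁ gᵢ(Π₁ᴸ w̃_{i,k}). Then for every K ∈ ℕ, decoding the aggregated encoded updates recovers the true aggregated update: Π₁ᴸ (Σᵢ ρᵢ w̃_{i,K}) = Σᵢ ρᵢ w_{i,K}. -/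
open Matrix

/-- **Proposition 1: correctness of immersion-based privacy-preserving aggregation.**
With `Π₁ᴸ Π₁ = I` (`P1L * P1 = 1`) and `Π₁ᴸ b = 0`, if each client `i` runs
the original optimizer `w_{i,k+1} = w_{i,k} − gᵢ(w_{i,k})` from `w⁰` and the
target optimizer `w̃_{i,k+1} = w̃_{i,k} − Π₁ gᵢ(Π₁ᴸ w̃_{i,k})` from
`w̃⁰ = Π₁ w⁰ + b`, then for every `K`, decoding the weighted aggregate of the
encoded updates recovers the true aggregate:
`Π₁ᴸ (Σᵢ ρᵢ w̃_{i,K}) = Σᵢ ρᵢ w_{i,K}`. -/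
theorem immersion_privacy_preserving_aggregation {n nt Nc : ℕ}
    (P1 : Matrix (Fin nt) (Fin n) ℝ) (P1L : Matrix (Fin n) (Fin nt) ℝ)
    (hleft : P1L * P1 = 1)
    (b : Fin nt → ℝ) (hb : P1L.mulVec b = 0)
    (g : Fin Nc → (Fin n → ℝ) → (Fin n → ℝ))
    (ρ : Fin Nc → ℝ) (hρ : ∀ i, 0 ≤ ρ i) (hρsum : ∑ i, ρ i = 1)
    (w0 : Fin n → ℝ)
    (w : Fin Nc → ℕ → (Fin n → ℝ)) (wtil : Fin Nc → ℕ → (Fin nt → ℝ))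
    (hw0 : ∀ i, w i 0 = w0)
    (hw : ∀ i k, w i (k + 1) = w i k - g i (w i k))
    (hwtil0 : ∀ i, wtil i 0 = P1.mulVec w0 + b)
    (hwtil : ∀ i k, wtil i (k + 1) = wtil i k - P1.mulVec (g i (P1L.mulVec (wtil i k)))) :
    ∀ K : ℕ, P1L.mulVec (∑ i, ρ i • wtil i K) = ∑ i, ρ i • w i K := by

  have key : ∀ i K, wtil i K = P1.mulVec (w i K) + b := by
    intro i K
    induction K with
    | zero => rw [hwtil0, hw0]
    | succ k ih =>
        have hdec : P1L.mulVec (wtil i k) = w i k := by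
          rw [ih, Matrix.mulVec_add, hb, Matrix.mulVec_mulVec, hleft,
            Matrix.one_mulVec, add_zero]
        rw [hwtil, hw, hdec, ih, Matrix.mulVec_sub]
        abel
  intro K
  have : ∀ i, P1L.mulVec (wtil i K) = w i K := by
    intro i
    rw [key, Matrix.mulVec_add, hb, Matrix.mulVec_mulVec, hleft,
      Matrix.one_mulVec, add_zero]
  calc P1L.mulVec (∑ i, ρ i • wtil i K)
      = ∑ i, ρ i • P1L.mulVec (wtil i K) := by
        have : P1L.mulVec (∑ i, ρ i • wtil i K)
            = P1L.mulVecLin (∑ i, ρ i • wtil i K) := rfl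
        rw [this, map_sum]
        simp [Matrix.mulVecLin]
    _ = ∑ i, ρ i • w i K := by simp [this]
end

section
/- (Multi-round correctness of the SIFL algorithm.) Let Π₁ be a real ñ × n matrix with a left inverse Π₁ᴸ (Π₁ᴸ Π₁ = Iₙ). For each client i ∈ {1, …, N_c} let gᵢ : ℝⁿ → ℝⁿ, let Fᵢ(w) = w − gᵢ(w) and F̃ᵢ(w̃) = w̃ − Π₁ gᵢ(Π₁ᴸ w̃), and let ρᵢ ≥ 0 with Σᵢ ρᵢ = 1. Let K ∈ ℕ and define the standard FL global iteration w^{t+1} = Σᵢ ρᵢ Fᵢ^K(w^t) (Fᵢ^K the K-fold composition of Fᵢ), starting from w⁰ ∈ ℝⁿ. For each round t let b^t ∈ ℝ^ñ satisfy Π₁ᴸ b^t = 0, and define the SIFL decoded sequence by v⁰ = w⁰ and v^{t+1} = Π₁ᴸ ( Σᵢ ρᵢ F̃ᵢ^K(Π₁ v^t + b^t) ). Then v^t = w^t for every t ∈ ℕ; i.e., the privacy-preserving scheme produces exactly the same sequence of global models as standard federated learning. -/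
open Matrix

/-- **Multi-round correctness of the SIFL algorithm.**
Standard FL iterates `w^{t+1} = Σᵢ ρᵢ Fᵢ^K(w^t)` with `Fᵢ(w) = w − gᵢ(w)`.
The SIFL decoded sequence `v⁰ = w⁰`,
`v^{t+1} = Π₁ᴸ (Σᵢ ρᵢ F̃ᵢ^K(Π₁ v^t + b^t))` with
`F̃ᵢ(w̃) = w̃ − Π₁ gᵢ(Π₁ᴸ w̃)`, `Π₁ᴸ Π₁ = I` and `Π₁ᴸ b^t = 0`, satisfies
`v^t = w^t` for all `t`. -/
theorem SIFL_multiround_correctness {n nt Nc : ℕ}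
    (P1 : Matrix (Fin nt) (Fin n) ℝ) (P1L : Matrix (Fin n) (Fin nt) ℝ)
    (hleft : P1L * P1 = 1)
    (g : Fin Nc → (Fin n → ℝ) → (Fin n → ℝ))
    (F : Fin Nc → (Fin n → ℝ) → (Fin n → ℝ))
    (hF : ∀ i x, F i x = x - g i x)
    (Ftil : Fin Nc → (Fin nt → ℝ) → (Fin nt → ℝ))
    (hFtil : ∀ i y, Ftil i y = y - P1.mulVec (g i (P1L.mulVec y)))
    (ρ : Fin Nc → ℝ) (hρ : ∀ i, 0 ≤ ρ i) (hρsum : ∑ i, ρ i = 1)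
    (K : ℕ) (w0 : Fin n → ℝ)
    (b : ℕ → (Fin nt → ℝ)) (hb : ∀ t, P1L.mulVec (b t) = 0)
    (w v : ℕ → (Fin n → ℝ))
    (hw0 : w 0 = w0)
    (hw : ∀ t, w (t + 1) = ∑ i, ρ i • (F i)^[K] (w t))
    (hv0 : v 0 = w0)
    (hv : ∀ t, v (t + 1) = P1L.mulVec (∑ i, ρ i • (Ftil i)^[K] (P1.mulVec (v t) + b t))) :
    ∀ t : ℕ, v t = w t := by
  have key : ∀ i (m : ℕ) (y : Fin nt → ℝ),
      P1L.mulVec ((Ftil i)^[m] y) = (F i)^[m] (P1L.mulVec y) := by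
    intro i m
    induction m with
    | zero => intro y; simp
    | succ m ih =>
      intro y
      rw [Function.iterate_succ_apply, Function.iterate_succ_apply, ih]
      congr 1
      rw [hFtil, hF, Matrix.mulVec_sub, Matrix.mulVec_mulVec, hleft,
        Matrix.one_mulVec]
  intro t
  induction t with
  | zero => rw [hv0, hw0]
  | succ t ih =>
    rw [hv, hw, ih]
    have hPb : P1L.mulVec (P1.mulVec (w t) + b t) = w t := by
      rw [Matrix.mulVec_add, hb, Matrix.mulVec_mulVec, hleft, Matrix.one_mulVec,
        add_zero]
    have hsum : P1L.mulVec (∑ i, ρ i • (Ftil i)^[K] (P1.mulVec (w t) + b t))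
        = ∑ i, P1L.mulVec (ρ i • (Ftil i)^[K] (P1.mulVec (w t) + b t)) :=
      map_sum P1L.mulVecLin _ _
    rw [hsum]
    refine Finset.sum_congr rfl fun i _ => ?_
    rw [Matrix.mulVec_smul, key, hPb]
end

section
/- (Multi-round correctness of the extended SIFL algorithm.) Let Π₁ be a real ñ × n matrix with a left inverse Π₁ᴸ (Π₁ᴸ Π₁ = Iₙ), and let Π₂ ∈ ℝ^{1×p} have a right inverse Π₂ᴿ ∈ ℝ^{p×1} (Π₂ Π₂ᴿ = 1) with N₂ ∈ ℝ^{(p−1)×p} satisfying N₂ Π₂ᴿ = 0. For each client i let gᵢ : ℝⁿ → ℝⁿ, Fᵢ(w) = w − gᵢ(w), F̃ᵢ(w̃) = w̃ − Π₁ gᵢ(Π₁ᴸ w̃), and let ρᵢ ≥ 0 with Σᵢ ρᵢ = 1. Define the standard FL iteration w^{t+1} = Σᵢ ρᵢ Fᵢ^K(w^t) from w⁰ ∈ ℝⁿ. Let b⁰ ∈ ℝ^ñ with Π₁ᴸ b⁰ = 0, and for each t ≥ 1 let B₁^t ∈ ℝ^{ñ×p} with Π₁ᴸ B₁^t = 0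 and R₂^t ∈ ℝ^{ñ×(p−1)} be arbitrary. Define the extended SIFL recursion: w̃⁰ = Π₁ w⁰ + b⁰; for t ≥ 0, w̃_a^{t+1} = Σᵢ ρᵢ F̃ᵢ^K(w̃^t); w′^{t+1} = Π₁ ( Π₁ᴸ ( w̃_a^{t+1} Π₂ + R₂^{t+1} N₂ ) ) + B₁^{t+1}; and w̃^{t+1} = w′^{t+1} Π₂ᴿ. Then for every t ∈ ℕ, w̃^t = Π₁ w^t + c^t for some c^t ∈ ℝ^ñ with Π₁ᴸ c^t = 0, and consequently Π₁ᴸ w̃^t = w^t; i.e., the extended scheme reproduces exactly the global models of standard federated learning while no party other than through decoding keys sees them. -/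
open Matrix

/-- **Multi-round correctness of the extended SIFL algorithm.**
Standard FL iterates `w^{t+1} = Σᵢ ρᵢ Fᵢ^K(w^t)` with `Fᵢ(w) = w − gᵢ(w)`.
In the extended SIFL recursion, clients run the target optimizer
`F̃ᵢ(w̃) = w̃ − Π₁ gᵢ(Π₁ᴸ w̃)`, the aggregator encodes the aggregate with
`· Π₂ + R₂ N₂`, the server decodes with `Π₁ᴸ` and re-encodes with
`Π₁ · + B₁`, and the clients decode via `· Π₂ᴿ`. Then for each round `t`
there exists `c^t` with `Π₁ᴸ c^t = 0` and `w̃^t = Π₁ w^t + c^t`;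
consequently `Π₁ᴸ w̃^t = w^t`: the extended scheme reproduces exactly the
global models of standard federated learning. -/
theorem extended_SIFL_multiround_correctness {n nt p Nc : ℕ}
    (P1 : Matrix (Fin nt) (Fin n) ℝ) (P1L : Matrix (Fin n) (Fin nt) ℝ)
    (hleft : P1L * P1 = 1)
    (P2 : Matrix (Fin 1) (Fin p) ℝ) (P2R : Matrix (Fin p) (Fin 1) ℝ)
    (hright : P2 * P2R = 1)
    (N2 : Matrix (Fin (p - 1)) (Fin p) ℝ) (hN2 : N2 * P2R = 0)
    (g : Fin Nc → Matrix (Fin n) (Fin 1) ℝ → Matrix (Fin n) (Fin 1) ℝ)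
    (F : Fin Nc → Matrix (Fin n) (Fin 1) ℝ → Matrix (Fin n) (Fin 1) ℝ)
    (hF : ∀ i x, F i x = x - g i x)
    (Ftil : Fin Nc → Matrix (Fin nt) (Fin 1) ℝ → Matrix (Fin nt) (Fin 1) ℝ)
    (hFtil : ∀ i y, Ftil i y = y - P1 * g i (P1L * y))
    (ρ : Fin Nc → ℝ) (hρ : ∀ i, 0 ≤ ρ i) (hρsum : ∑ i, ρ i = 1)
    (K : ℕ)
    (w : ℕ → Matrix (Fin n) (Fin 1) ℝ)
    (hw : ∀ t, w (t + 1) = ∑ i, ρ i • (F i)^[K] (w t))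
    (b0 : Matrix (Fin nt) (Fin 1) ℝ) (hb0 : P1L * b0 = 0)
    (B1 : ℕ → Matrix (Fin nt) (Fin p) ℝ) (hB1 : ∀ t, P1L * B1 t = 0)
    (R2 : ℕ → Matrix (Fin nt) (Fin (p - 1)) ℝ)
    (wtil : ℕ → Matrix (Fin nt) (Fin 1) ℝ)
    (hwtil0 : wtil 0 = P1 * w 0 + b0)
    (hwtil : ∀ t, wtil (t + 1) =
      (P1 * (P1L * ((∑ i, ρ i • (Ftil i)^[K] (wtil t)) * P2 + R2 (t + 1) * N2))
        + B1 (t + 1)) * P2R) :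
    ∀ t : ℕ, (∃ c : Matrix (Fin nt) (Fin 1) ℝ, P1L * c = 0 ∧ wtil t = P1 * w t + c)
      ∧ P1L * wtil t = w t := by
  -- key iterate lemma
  have iter : ∀ (i : Fin Nc) (K' : ℕ) (x : Matrix (Fin n) (Fin 1) ℝ)
      (c : Matrix (Fin nt) (Fin 1) ℝ), P1L * c = 0 →
      (Ftil i)^[K'] (P1 * x + c) = P1 * (F i)^[K'] x + c := by
    intro i K' x c hc
    induction K' generalizing x with
    | zero => simp
    | succ k ih =>
      rw [Function.iterate_succ_apply, Function.iterate_succ_apply, hFtil]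
      have : P1L * (P1 * x + c) = x := by
        rw [Matrix.mul_add, ← Matrix.mul_assoc, hleft, hc, Matrix.one_mul, add_zero]
      rw [this, ← ih (F i x) ]
      congr 1
      rw [hF, Matrix.mul_sub]
      abel
  intro t
  induction t with
  | zero =>
    refine ⟨⟨b0, hb0, hwtil0⟩, ?_⟩
    rw [hwtil0, Matrix.mul_add, ← Matrix.mul_assoc, hleft, hb0, Matrix.one_mul, add_zero]
  | succ t ih =>
    obtain ⟨⟨c, hc, hwc⟩, _⟩ := ih
    have hsum : (∑ i, ρ i • (Ftil i)^[K] (wtil t))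
        = P1 * w (t + 1) + c := by
      rw [hw]
      calc (∑ i, ρ i • (Ftil i)^[K] (wtil t))
          = ∑ i, ρ i • (P1 * (F i)^[K] (w t) + c) := by
            refine Finset.sum_congr rfl fun i _ => ?_
            rw [hwc, iter i K (w t) c hc]
        _ = ∑ i, (P1 * (ρ i • (F i)^[K] (w t)) + ρ i • c) := by
            refine Finset.sum_congr rfl fun i _ => ?_
            rw [smul_add, Matrix.mul_smul]
        _ = P1 * (∑ i, ρ i • (F i)^[K] (w t)) + c := by
            rw [Finset.sum_add_distrib, ← Matrix.mul_sum, ← Finset.sum_smul,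
              hρsum, one_smul]
    have key : wtil (t + 1) = P1 * w (t + 1) + B1 (t + 1) * P2R := by
      rw [hwtil t, hsum]
      have h1 : P1L * ((P1 * w (t + 1) + c) * P2 + R2 (t + 1) * N2)
          = w (t + 1) * P2 + P1L * (R2 (t + 1) * N2) := by
        rw [Matrix.mul_add, Matrix.add_mul, Matrix.mul_add, Matrix.mul_assoc P1,
          ← Matrix.mul_assoc P1L P1, hleft, Matrix.one_mul,
          ← Matrix.mul_assoc P1L c, hc, Matrix.zero_mul, add_zero]
      rw [h1, Matrix.add_mul, Matrix.mul_add, Matrix.add_mul]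
      have h2 : P1 * (w (t + 1) * P2) * P2R = P1 * w (t + 1) := by
        rw [Matrix.mul_assoc, Matrix.mul_assoc, hright, Matrix.mul_one]
      have h3 : P1 * (P1L * (R2 (t + 1) * N2)) * P2R = 0 := by
        rw [Matrix.mul_assoc, Matrix.mul_assoc, Matrix.mul_assoc, hN2,
          Matrix.mul_zero, Matrix.mul_zero, Matrix.mul_zero]
      rw [h2, h3, add_zero]
    refine ⟨⟨B1 (t + 1) * P2R, ?_, key⟩, ?_⟩
    · rw [← Matrix.mul_assoc, hB1, Matrix.zero_mul]
    · rw [key, Matrix.mul_add, ← Matrix.mul_assoc, hleft, Matrix.one_mul,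
        ← Matrix.mul_assoc, hB1, Matrix.zero_mul, add_zero]
end

section
/- (ε-differential privacy of the Laplace mechanism, core of Theorem 1.) For m ∈ ℝ and scale b̄ > 0 let μ_m denote the Laplace measure on ℝ, i.e., the measure with density x ↦ (1/(2b̄)) exp(−|x − m| / b̄) with respect to Lebesgue measure. Then for all m, m′ ∈ ℝ and every Lebesgue-measurable set S ⊆ ℝ, μ_m(S) ≤ exp(|m − m′| / b̄) · μ_{m′}(S). -/
open MeasureTheory

/-- The Laplace measure on `ℝ` with location `m` and scale `bbar`: the measure
with density `x ↦ (1/(2 bbar)) exp(−|x − m| / bbar)` w.r.t. Lebesgue measure. -/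
noncomputable def laplaceMeasure (m bbar : ℝ) : Measure ℝ :=
  volume.withDensity fun x => ENNReal.ofReal ((1 / (2 * bbar)) * Real.exp (-|x - m| / bbar))

/-- **ε-differential privacy of the Laplace mechanism (core of Theorem 1).**
For scale `bbar > 0` and any two locations `m, m′`, the Laplace measures
satisfy `μ_m(S) ≤ exp(|m − m′| / bbar) · μ_{m′}(S)` for every Lebesgue-measurable
set `S ⊆ ℝ`. -/
theorem laplace_mechanism_dp (bbar : ℝ) (hb : 0 < bbar) (m m' : ℝ)
    (S : Set ℝ) (hS : MeasurableSet S) :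
    laplaceMeasure m bbar S ≤
      ENNReal.ofReal (Real.exp (|m - m'| / bbar)) * laplaceMeasure m' bbar S := by
  have hmeas : Measurable fun x : ℝ =>
      ENNReal.ofReal ((1 / (2 * bbar)) * Real.exp (-|x - m'| / bbar)) := by
    apply ENNReal.measurable_ofReal.comp
    exact (measurable_const.mul ((measurable_id.sub measurable_const).abs.neg.div_const
      bbar).exp)
  rw [laplaceMeasure, laplaceMeasure, withDensity_apply _ hS, withDensity_apply _ hS,
    ← lintegral_const_mul _ hmeas]
  apply lintegral_mono
  intro x
  simp only []
  rw [← ENNReal.ofReal_mul (Real.exp_nonneg _)]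
  apply ENNReal.ofReal_le_ofReal
  rw [mul_left_comm, ← Real.exp_add]
  apply mul_le_mul_of_nonneg_left _ (by positivity)
  apply Real.exp_le_exp.mpr
  rw [← add_div, div_le_div_iff_of_pos_right hb]
  have := abs_sub_abs_le_abs_sub (x - m') (x - m)
  have h2 : x - m' - (x - m) = m - m' := by ring
  rw [h2] at this
  linarith
end

section
/- ((ε, δ)-differential privacy of the Gaussian mechanism, core of Theorem 2.) Let σ > 0, Δ > 0, ε > 0, and δ ≥ 0, and let Q denote the standard normal tail function Q(x) = γ₀,₁([x, ∞)), where γ₀,₁ is the standard Gaussian measure on ℝ. If Q( εσ/Δ − Δ/(2σ) ) ≤ δ, then for all m, m′ ∈ ℝ with |m − m′| ≤ Δ and every Borel set S ⊆ ℝ, the Gaussian measures γ_{m,σ²} and γ_{m′,σ²} with means m, m′ and common variance σ² satisfy γ_{m,σ²}(S) ≤ e^ε · γ_{m′,σ²}(S) + δ. -/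
open MeasureTheory ProbabilityTheory

/-- The standard normal tail function `Q(x) = γ₀,₁([x, ∞))`. -/
noncomputable def stdNormalTail (x : ℝ) : ℝ :=
  (gaussianReal 0 1 (Set.Ici x)).toReal

lemma gauss_map (m σ : ℝ) :
    (gaussianReal 0 1).map (fun x => σ * x + m) = gaussianReal m ⟨σ^2, sq_nonneg σ⟩ := by
  have h2 := gaussianReal_map_const_mul (μ := 0) (v := 1) σ
  have he : (fun x : ℝ => σ * x + m) = (· + m) ∘ (σ * ·) := rfl
  rw [he, ← Measure.map_map (measurable_add_const m) (measurable_const_mul σ), h2,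
    gaussianReal_map_add_const]
  congr 1
  · ring
  · ext; simp; rfl

lemma gauss_Ici (m σ : ℝ) (hσ : 0 < σ) (t : ℝ) :
    gaussianReal m ⟨σ^2, sq_nonneg σ⟩ (Set.Ici t) = gaussianReal 0 1 (Set.Ici ((t - m)/σ)) := by
  rw [← gauss_map m σ, Measure.map_apply (by fun_prop) measurableSet_Ici]
  congr 1
  ext x
  simp only [Set.mem_preimage, Set.mem_Ici]
  rw [div_le_iff₀ hσ, mul_comm x σ, sub_le_iff_le_add]

lemma gauss_std_symm (c : ℝ) : gaussianReal 0 1 (Set.Iic c) = gaussianReal 0 1 (Set.Ici (-c)) := by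
  have h := gaussianReal_map_const_mul (μ := 0) (v := 1) (-1)
  have h1 : (NNReal.mk ((-1:ℝ)^2) (sq_nonneg _)) * 1 = 1 := by ext; norm_num
  rw [h1, mul_zero] at h
  conv_lhs => rw [← h]
  rw [Measure.map_apply (measurable_const_mul _) measurableSet_Iic]
  congr 1
  ext x
  simp only [Set.mem_preimage, Set.mem_Iic, Set.mem_Ici]
  constructor <;> intro <;> linarith

lemma gauss_Iic (m σ : ℝ) (hσ : 0 < σ) (t : ℝ) :
    gaussianReal m ⟨σ^2, sq_nonneg σ⟩ (Set.Iic t) = gaussianReal 0 1 (Set.Ici (-((t - m)/σ))) := by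
  rw [← gauss_map m σ, Measure.map_apply (by fun_prop) measurableSet_Iic, ← gauss_std_symm]
  congr 1
  ext x
  simp only [Set.mem_preimage, Set.mem_Iic]
  rw [le_div_iff₀ hσ, mul_comm x σ, le_sub_iff_add_le]

lemma stdNormalTail_anti {x y : ℝ} (h : x ≤ y) : stdNormalTail y ≤ stdNormalTail x :=
  ENNReal.toReal_mono (measure_ne_top _ _) (measure_mono (Set.Ici_subset_Ici.2 h))

lemma pdf_le (m m' σ ε : ℝ) (hσ : 0 < σ) (x : ℝ)
    (hx : (m - m') * (x - m) ≤ σ^2*ε - (m-m')^2/2) :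
    gaussianPDFReal m ⟨σ^2, sq_nonneg σ⟩ x ≤
      Real.exp ε * gaussianPDFReal m' ⟨σ^2, sq_nonneg σ⟩ x := by
  have hc : ((⟨σ^2, sq_nonneg σ⟩ : NNReal) : ℝ) = σ^2 := rfl
  simp only [gaussianPDFReal, hc]
  have hC : (0:ℝ) ≤ (Real.sqrt (2 * Real.pi * σ^2))⁻¹ := by positivity
  have h2 : (0:ℝ) < 2*σ^2 := by positivity
  have key : Real.exp (-(x-m)^2/(2*σ^2)) ≤ Real.exp ε * Real.exp (-(x-m')^2/(2*σ^2)) := by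
    rw [← Real.exp_add]
    apply Real.exp_le_exp.2
    have hdiv : ((x-m')^2 - (x-m)^2)/(2*σ^2) ≤ ε := by
      rw [div_le_iff₀ h2]; nlinarith
    have e : -(x-m)^2/(2*σ^2) = -(x-m')^2/(2*σ^2) + ((x-m')^2-(x-m)^2)/(2*σ^2) := by ring
    linarith
  calc (Real.sqrt (2 * Real.pi * σ^2))⁻¹ * Real.exp (-(x-m)^2/(2*σ^2))
      ≤ (Real.sqrt (2 * Real.pi * σ^2))⁻¹ * (Real.exp ε * Real.exp (-(x-m')^2/(2*σ^2))) :=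
        mul_le_mul_of_nonneg_left key hC
    _ = Real.exp ε * ((Real.sqrt (2 * Real.pi * σ^2))⁻¹ * Real.exp (-(x-m')^2/(2*σ^2))) := by ring

lemma arg_eq (σ ε a : ℝ) (hσ : σ ≠ 0) (ha : a ≠ 0) :
    (σ^2*ε - a^2/2)/a/σ = ε*σ/a - a/(2*σ) := by
  field_simp

/-- **(ε, δ)-differential privacy of the Gaussian mechanism (core of
Theorem 2).** If `Q(εσ/Δ − Δ/(2σ)) ≤ δ`, then for all means `m, m′` with
`|m − m′| ≤ Δ` and every Borel set `S`, the Gaussian measures with common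
variance `σ²` satisfy `γ_{m,σ²}(S) ≤ e^ε γ_{m′,σ²}(S) + δ`. -/
theorem gaussian_mechanism_dp (σ Δ ε δ : ℝ)
    (hσ : 0 < σ) (hΔ : 0 < Δ) (hε : 0 < ε) (hδ : 0 ≤ δ)
    (htail : stdNormalTail (ε * σ / Δ - Δ / (2 * σ)) ≤ δ) :
    ∀ m m' : ℝ, |m - m'| ≤ Δ →
      ∀ S : Set ℝ, MeasurableSet S →
        (gaussianReal m ⟨σ ^ 2, sq_nonneg σ⟩ S).toReal ≤
          Real.exp ε * (gaussianReal m' ⟨σ ^ 2, sq_nonneg σ⟩ S).toReal + δ := by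
  intro m m' hmm' S hS
  set v : NNReal := ⟨σ^2, sq_nonneg σ⟩ with hv_def
  have hv : v ≠ 0 := by
    intro h
    have := congrArg NNReal.toReal h
    simp only [hv_def, NNReal.coe_mk, NNReal.coe_zero] at this
    change σ ^ 2 = 0 at this
    nlinarith
  by_cases ha0 : m - m' = 0
  · have hm : m = m' := by linarith
    rw [hm]
    nlinarith [Real.one_le_exp hε.le,
      ENNReal.toReal_nonneg (a := gaussianReal m' v S)]
  have tail_mono : ∀ b : ℝ, 0 < b → b ≤ Δ → stdNormalTail (ε*σ/b - b/(2*σ)) ≤ δ := by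
    intro b hb hbΔ
    refine le_trans (stdNormalTail_anti ?_) htail
    have h1 : ε*σ/Δ ≤ ε*σ/b := by gcongr
    have h2 : b/(2*σ) ≤ Δ/(2*σ) := by gcongr
    linarith
  have habs := abs_le.1 hmm'
  -- bad set
  set B : Set ℝ := {x | σ^2*ε - (m-m')^2/2 ≤ (m-m') * (x - m)} with hB_def
  have hBmeas : MeasurableSet B :=
    measurableSet_le measurable_const (by fun_prop)
  -- bound on bad set
  have hbad : (gaussianReal m v B).toReal ≤ δ := by
    rcases lt_or_gt_of_ne ha0 with hneg | hpos
    · have hBeq : B = Set.Iic (m + (σ^2*ε - (m-m')^2/2)/(m-m')) := by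
        ext x
        simp only [hB_def, Set.mem_setOf_eq, Set.mem_Iic]
        rw [← sub_le_iff_le_add', le_div_iff_of_neg hneg, mul_comm (x - m) (m - m')]
      have harg : -((m + (σ^2*ε - (m-m')^2/2)/(m-m') - m)/σ)
          = ε*σ/(-(m-m')) - (-(m-m'))/(2*σ) := by
        rw [add_sub_cancel_left, arg_eq σ ε (m-m') hσ.ne' ha0, div_neg, neg_div]
        ring
      rw [hBeq, hv_def, gauss_Iic m σ hσ, harg]
      exact tail_mono _ (by linarith) (by linarith)
    · have hBeq : B = Set.Ici (m + (σ^2*ε - (m-m')^2/2)/(m-m')) := by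
        ext x
        simp only [hB_def, Set.mem_setOf_eq, Set.mem_Ici]
        have hiff : (σ^2*ε - (m-m')^2/2)/(m-m') ≤ x - m ↔
            σ^2*ε - (m-m')^2/2 ≤ (m-m')*(x-m) := by
          rw [div_le_iff₀ hpos, mul_comm (x - m) (m - m')]
        rw [← hiff]
        constructor <;> intro <;> linarith
      have harg : (m + (σ^2*ε - (m-m')^2/2)/(m-m') - m)/σ
          = ε*σ/(m-m') - (m-m')/(2*σ) := by
        rw [add_sub_cancel_left, arg_eq σ ε (m-m') hσ.ne' ha0]
      rw [hBeq, hv_def, gauss_Ici m σ hσ, harg]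
      exact tail_mono _ hpos (by linarith)
  have hgood : gaussianReal m v (S ∩ Bᶜ) ≤
      ENNReal.ofReal (Real.exp ε) * gaussianReal m' v (S ∩ Bᶜ) := by
    rw [gaussianReal_apply m hv, gaussianReal_apply m' hv,
      ← lintegral_const_mul' _ _ ENNReal.ofReal_ne_top]
    refine setLIntegral_mono ((measurable_gaussianPDF m' v).const_mul _) ?_
    intro x hx
    have hxB : x ∉ B := hx.2
    simp only [hB_def, Set.mem_setOf_eq, not_le] at hxB
    have hle : (m - m') * (x - m) ≤ σ^2*ε - (m-m')^2/2 := hxB.le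
    calc gaussianPDF m v x = ENNReal.ofReal (gaussianPDFReal m v x) := rfl
      _ ≤ ENNReal.ofReal (Real.exp ε * gaussianPDFReal m' v x) :=
          ENNReal.ofReal_le_ofReal (pdf_le m m' σ ε hσ x hle)
      _ = ENNReal.ofReal (Real.exp ε) * gaussianPDF m' v x :=
          ENNReal.ofReal_mul (Real.exp_nonneg ε)
  have hsplit : gaussianReal m v S ≤ gaussianReal m v (S ∩ Bᶜ) + gaussianReal m v B := by
    refine le_trans (measure_mono ?_) (measure_union_le _ _)
    intro x hx
    by_cases hxB : x ∈ B
    · exact Or.inr hxB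
    · exact Or.inl ⟨hx, hxB⟩
  have hmono : gaussianReal m' v (S ∩ Bᶜ) ≤ gaussianReal m' v S :=
    measure_mono Set.inter_subset_left
  have total : gaussianReal m v S ≤
      ENNReal.ofReal (Real.exp ε) * gaussianReal m' v S + gaussianReal m v B :=
    le_trans hsplit (add_le_add (le_trans hgood (mul_le_mul_right hmono _)) le_rfl)
  have hne1 : ENNReal.ofReal (Real.exp ε) * gaussianReal m' v S ≠ ⊤ :=
    ENNReal.mul_ne_top ENNReal.ofReal_ne_top (measure_ne_top _ _)
  calc (gaussianReal m v S).toReal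
      ≤ (ENNReal.ofReal (Real.exp ε) * gaussianReal m' v S + gaussianReal m v B).toReal :=
        ENNReal.toReal_mono (by finiteness) total
    _ = Real.exp ε * (gaussianReal m' v S).toReal + (gaussianReal m v B).toReal := by
        rw [ENNReal.toReal_add hne1 (measure_ne_top _ _), ENNReal.toReal_mul,
          ENNReal.toReal_ofReal (Real.exp_nonneg ε)]
    _ ≤ Real.exp ε * (gaussianReal m' v S).toReal + δ := by linarith
end
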